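/- arXiv:2110.02655 — 2 statements merged into one kernel-verified Lean document; each statement's English description precedes it below -/
import Mathlib

section
/- In the setting of the context, let b' : (−∞, 0] → [0, b∞] be another continuous nonincreasing function with b'(s) > 0 for all s < 0, and let t ≤ 0 satisfy b(t) ≠ b'(t). Then for every ε > 0 and all n, m ∈ ℕ, lim_{c→∞} D_{(−∞,t]}(n,m)(c) / D_{[t−ε,t]}(n,m)(c) = 1, where D_J(n,m)(c) := I^b_J(n,m)(c) − I^{b'}_J(n,m)(c). -/
open MeasureTheory

/-- The quantity `I^b_J(n,m)(c)` from the paper. -/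
noncomputable def Ib (r : ℝ) (htil : ℝ → ℝ) (b : ℝ → ℝ) (J : Set ℝ)
    (n m : ℕ) (c : ℝ) : ℝ :=
  ∫ s in J, ∫ y in Set.Ioc (0 : ℝ) (b s),
    (1 - s) ^ n * y ^ m * Real.exp (c * y + c ^ 2 * s / 2 - r * s) * htil y

/-!
With `λ = c²/2 - r` and `Φ_c(x) = ∫₀ˣ yᵐ e^{cy} h̃(y) dy` (`expMoment`), every difference is
`D_J(c) = ∫_J (1 - s)ⁿ e^{λs} (Φ_c(b s) - Φ_c(b' s)) ds`. Say `b' t < β < b t`. Since `b` is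
nonincreasing and `b'` continuous, on some `(t - δ, t]` the bracket is at least `e^{βc} A`, where
`A = ∫_β^{b t} yᵐ h̃ > 0` because `h̃` vanishes only on a null set; everywhere it is at most
`e^{c b∞} M`. The Gaussian factor `e^{λs}` then makes everything below `t - δ` negligible against
the contribution of `(t - δ, t]`, by a factor `e^{(b∞ - β)c - λδ/2} → 0`, and both `D_{(-∞,t]}` and
`D_{[t-ε,t]}` are that contribution up to negligible errors.
-/

open Set Filter Topology Real

theorem tendsto_add_div_add_of_abs_le {α : Type*} {l : Filter α} {P E₁ E₂ u v : α → ℝ}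
    (hv : ∀ᶠ x in l, 0 < v x ∧ v x ≤ P x) (hE₁ : ∀ᶠ x in l, |E₁ x| ≤ u x)
    (hE₂ : ∀ᶠ x in l, |E₂ x| ≤ u x) (huv : Tendsto (fun x => u x / v x) l (𝓝 0)) :
    Tendsto (fun x => (E₁ x + P x) / (E₂ x + P x)) l (𝓝 1) := by
  have negligible : ∀ E : α → ℝ, (∀ᶠ x in l, |E x| ≤ u x) →
      Tendsto (fun x => E x / P x) l (𝓝 0) := by
    intro E hE
    refine squeeze_zero_norm' ?_ huv
    filter_upwards [hv, hE] with x ⟨hv0, hvP⟩ hEx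
    rw [norm_div, Real.norm_eq_abs, Real.norm_eq_abs, abs_of_pos (hv0.trans_le hvP)]
    exact div_le_div₀ ((abs_nonneg _).trans hEx) hEx hv0 hvP
  have h := ((negligible E₁ hE₁).add_const 1).div ((negligible E₂ hE₂).add_const 1) (by norm_num)
  rw [zero_add, div_one] at h
  refine h.congr' ?_
  filter_upwards [hv] with x ⟨hv0, hvP⟩
  have hP : P x ≠ 0 := (hv0.trans_le hvP).ne'
  simp only [Pi.div_apply]
  field_simp

theorem tendsto_mul_exp_div_mul_exp_atTop {α : Type*} {l : Filter α} {f g : α → ℝ}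
    (a b : ℝ) (hfg : Tendsto (fun x => f x - g x) l atBot) :
    Tendsto (fun x => a * exp (f x) / (b * exp (g x))) l (𝓝 0) := by
  have h := (tendsto_exp_atBot.comp hfg).const_mul (a / b)
  rw [mul_zero] at h
  refine h.congr fun x => ?_
  rw [Function.comp_apply, exp_sub]
  ring

theorem tendsto_quadratic_atBot {a : ℝ} (ha : a < 0) (p q : ℝ) :
    Tendsto (fun x : ℝ => a * x ^ 2 + p * x + q) atTop atBot :=
  (tendsto_atBot_add_const_right _ q <|
    (tendsto_atBot_add_const_right _ p (tendsto_id.const_mul_atTop_of_neg ha)).atBot_mul_atTop₀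
      tendsto_id).congr fun x => by simp only [id]; ring

section Weight

variable {n : ℕ} {lam T : ℝ} {g : ℝ → ℝ}

theorem one_sub_pow_mul_exp_le {s : ℝ} (hs : s ≤ 1) :
    (1 - s) ^ n * exp (lam * s) ≤ n.factorial * exp 1 * exp ((lam - 1) * s) := by
  have h := pow_div_factorial_le_exp _ (sub_nonneg.2 hs) n
  rw [div_le_iff₀ (by positivity)] at h
  calc (1 - s) ^ n * exp (lam * s) ≤ exp (1 - s) * n.factorial * exp (lam * s) := by gcongr
    _ = n.factorial * exp 1 * exp ((lam - 1) * s) := by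
      rw [mul_comm (exp _), mul_assoc, mul_assoc, ← exp_add, ← exp_add]; ring_nf

theorem abs_one_sub_pow_mul_exp_mul_le {K s : ℝ} (hs : s ≤ 1) (hgK : |g s| ≤ K) :
    |(1 - s) ^ n * exp (lam * s) * g s| ≤ K * n.factorial * exp 1 * exp ((lam - 1) * s) := by
  have hw : 0 ≤ (1 - s) ^ n * exp (lam * s) := by have := sub_nonneg.2 hs; positivity
  rw [abs_mul, abs_of_nonneg hw]
  calc (1 - s) ^ n * exp (lam * s) * |g s| ≤ n.factorial * exp 1 * exp ((lam - 1) * s) * K :=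
        mul_le_mul (one_sub_pow_mul_exp_le hs) hgK (abs_nonneg _) (by positivity)
    _ = _ := by ring

theorem integrableOn_one_sub_pow_mul_exp_mul {K : ℝ} (hlam : 1 < lam) (hT : T ≤ 1)
    (hg : AEStronglyMeasurable g (volume.restrict (Iic T))) (hgK : ∀ s ≤ T, |g s| ≤ K) :
    IntegrableOn (fun s => (1 - s) ^ n * exp (lam * s) * g s) (Iic T) := by
  refine Integrable.mono' ((integrableOn_exp_mul_Iic (sub_pos.2 hlam) T).const_mul
    (K * n.factorial * exp 1)) ((by fun_prop : Continuous fun s : ℝ =>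
      (1 - s) ^ n * exp (lam * s)).aestronglyMeasurable.mul hg) ?_
  filter_upwards [ae_restrict_mem measurableSet_Iic] with s hs
  rw [Real.norm_eq_abs]
  exact abs_one_sub_pow_mul_exp_mul_le (hs.trans hT) (hgK s hs)

theorem abs_setIntegral_one_sub_pow_mul_exp_mul_le {K : ℝ} {J : Set ℝ} (hlam : 1 < lam)
    (hT : T ≤ 1) (hJ : J ⊆ Iic T) (hg : AEStronglyMeasurable g (volume.restrict (Iic T)))
    (hgK : ∀ s ≤ T, |g s| ≤ K) :
    |∫ s in J, (1 - s) ^ n * exp (lam * s) * g s|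
      ≤ K * n.factorial * exp 1 * exp ((lam - 1) * T) / (lam - 1) := by
  have hint := integrableOn_one_sub_pow_mul_exp_mul (n := n) hlam hT hg hgK
  calc |∫ s in J, (1 - s) ^ n * exp (lam * s) * g s|
      ≤ ∫ s in J, |(1 - s) ^ n * exp (lam * s) * g s| := abs_integral_le_integral_abs
    _ ≤ ∫ s in Iic T, |(1 - s) ^ n * exp (lam * s) * g s| :=
      setIntegral_mono_set hint.abs (Eventually.of_forall fun _ => abs_nonneg _)
        hJ.eventuallyLE
    _ ≤ ∫ s in Iic T, K * n.factorial * exp 1 * exp ((lam - 1) * s) :=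
      setIntegral_mono_on hint.abs ((integrableOn_exp_mul_Iic (sub_pos.2 hlam) T).const_mul _)
        measurableSet_Iic fun s hs => abs_one_sub_pow_mul_exp_mul_le (hs.trans hT) (hgK s hs)
    _ = K * n.factorial * exp 1 * exp ((lam - 1) * T) / (lam - 1) := by
      rw [integral_const_mul, integral_exp_mul_Iic (sub_pos.2 hlam), mul_div_assoc]

theorem le_setIntegral_one_sub_pow_mul_exp_mul {L a a' t : ℝ} (hlam : 0 ≤ lam) (ht : t ≤ 0)
    (ha : a ≤ a') (ha' : a' ≤ t) (hL : 0 ≤ L) (hgL : ∀ s ∈ Ioc a t, L ≤ g s)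
    (hint : IntegrableOn (fun s => (1 - s) ^ n * exp (lam * s) * g s) (Ioc a t)) :
    L * exp (lam * a') * (t - a') ≤ ∫ s in Ioc a t, (1 - s) ^ n * exp (lam * s) * g s := by
  have hlower : ∀ s ∈ Ioc a t, L * exp (lam * s) ≤ (1 - s) ^ n * exp (lam * s) * g s := by
    intro s hs
    have h1 : 1 ≤ (1 - s) ^ n := one_le_pow₀ (by linarith [hs.2])
    calc L * exp (lam * s) ≤ g s * exp (lam * s) := by gcongr; exact hgL s hs
      _ ≤ (1 - s) ^ n * exp (lam * s) * g s := by
        rw [mul_comm, mul_assoc]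
        exact le_mul_of_one_le_left (mul_nonneg (exp_pos _).le (hL.trans (hgL s hs))) h1
  calc L * exp (lam * a') * (t - a')
      ≤ ∫ s in Ioc a' t, (1 - s) ^ n * exp (lam * s) * g s := by
        have := setIntegral_ge_of_const_le_real (s := Ioc a' t) measurableSet_Ioc
          measure_Ioc_lt_top.ne (fun s hs => (mul_le_mul_of_nonneg_left (exp_le_exp.2
            (mul_le_mul_of_nonneg_left hs.1.le hlam)) hL).trans
              (hlower s (Ioc_subset_Ioc_left ha hs)))
          (hint.mono_set (Ioc_subset_Ioc_left ha))
        rwa [Real.volume_real_Ioc_of_le ha'] at this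
    _ ≤ ∫ s in Ioc a t, (1 - s) ^ n * exp (lam * s) * g s :=
        setIntegral_mono_set hint
          ((ae_restrict_mem measurableSet_Ioc).mono fun s hs =>
            (mul_nonneg hL (exp_pos _).le).trans (hlower s hs))
          (Ioc_subset_Ioc_left ha).eventuallyLE

end Weight

noncomputable def expMoment (htil : ℝ → ℝ) (m : ℕ) (c x : ℝ) : ℝ :=
  ∫ y in Ioc 0 x, y ^ m * exp (c * y) * htil y

theorem Ib_eq_setIntegral_expMoment (r : ℝ) (htil b : ℝ → ℝ) (J : Set ℝ) (n m : ℕ) (c : ℝ) :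
    Ib r htil b J n m c =
      ∫ s in J, (1 - s) ^ n * exp ((c ^ 2 / 2 - r) * s) * expMoment htil m c (b s) := by
  unfold Ib expMoment
  congr 1
  funext s
  rw [← integral_const_mul]
  congr 1
  funext y
  rw [show c * y + c ^ 2 * s / 2 - r * s = (c ^ 2 / 2 - r) * s + c * y by ring, exp_add]
  ring

section ExpMoment

variable {htil : ℝ → ℝ} {bInfty : ℝ} {m : ℕ} {c x x' : ℝ}

theorem integrableOn_pow_mul_exp_mul (hcont : ContinuousOn htil (Icc 0 bInfty)) (m : ℕ)
    (c : ℝ) : IntegrableOn (fun y => y ^ m * exp (c * y) * htil y) (Icc 0 bInfty) :=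
  ((by fun_prop : Continuous fun y : ℝ => y ^ m * exp (c * y)).continuousOn.mul
    hcont).integrableOn_Icc

theorem integrableOn_pow_mul (hcont : ContinuousOn htil (Icc 0 bInfty)) (m : ℕ) :
    IntegrableOn (fun y => y ^ m * htil y) (Icc 0 bInfty) := by
  simpa using integrableOn_pow_mul_exp_mul hcont m 0

theorem continuousOn_expMoment (hcont : ContinuousOn htil (Icc 0 bInfty)) :
    ContinuousOn (expMoment htil m c) (Icc 0 bInfty) :=
  intervalIntegral.continuousOn_primitive (integrableOn_pow_mul_exp_mul hcont m c)

theorem expMoment_sub_expMoment (hcont : ContinuousOn htil (Icc 0 bInfty)) (hx : 0 ≤ x)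
    (hxx' : x ≤ x') (hx' : x' ≤ bInfty) :
    expMoment htil m c x' - expMoment htil m c x =
      ∫ y in Ioc x x', y ^ m * exp (c * y) * htil y := by
  have hint := (integrableOn_pow_mul_exp_mul hcont m c).mono_set
    (Ioc_subset_Icc_self.trans (Icc_subset_Icc_right hx'))
  rw [expMoment, expMoment, ← Ioc_union_Ioc_eq_Ioc hx hxx',
    setIntegral_union (Ioc_disjoint_Ioc_of_le le_rfl) measurableSet_Ioc
      (hint.mono_set (Ioc_subset_Ioc_right hxx')) (hint.mono_set (Ioc_subset_Ioc_left hx)),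
    add_sub_cancel_left]

theorem setIntegral_pow_mul_exp_mul_nonneg (hnonneg : ∀ y ∈ Icc 0 bInfty, 0 ≤ htil y)
    {a a' : ℝ} (ha : 0 ≤ a) (ha' : a' ≤ bInfty) :
    0 ≤ ∫ y in Ioc a a', y ^ m * exp (c * y) * htil y :=
  setIntegral_nonneg measurableSet_Ioc fun y hy => by
    have := hnonneg y ⟨ha.trans hy.1.le, hy.2.trans ha'⟩
    have := ha.trans_lt hy.1
    positivity

theorem expMoment_nonneg (hnonneg : ∀ y ∈ Icc 0 bInfty, 0 ≤ htil y) (hx : x ≤ bInfty) :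
    0 ≤ expMoment htil m c x :=
  setIntegral_pow_mul_exp_mul_nonneg hnonneg le_rfl hx

theorem expMoment_le (hcont : ContinuousOn htil (Icc 0 bInfty))
    (hnonneg : ∀ y ∈ Icc 0 bInfty, 0 ≤ htil y) (hx : x ∈ Icc 0 bInfty) :
    expMoment htil m c x ≤ expMoment htil m c bInfty :=
  sub_nonneg.1 <| (expMoment_sub_expMoment hcont hx.1 hx.2 le_rfl).symm ▸
    setIntegral_pow_mul_exp_mul_nonneg hnonneg hx.1 le_rfl

theorem abs_expMoment_sub_le (hcont : ContinuousOn htil (Icc 0 bInfty))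
    (hnonneg : ∀ y ∈ Icc 0 bInfty, 0 ≤ htil y) (hx : x ∈ Icc 0 bInfty)
    (hx' : x' ∈ Icc 0 bInfty) :
    |expMoment htil m c x - expMoment htil m c x'| ≤ expMoment htil m c bInfty :=
  abs_sub_le_of_nonneg_of_le (expMoment_nonneg hnonneg hx.2) (expMoment_le hcont hnonneg hx)
    (expMoment_nonneg hnonneg hx'.2) (expMoment_le hcont hnonneg hx')

theorem expMoment_le_exp_mul (hcont : ContinuousOn htil (Icc 0 bInfty))
    (hnonneg : ∀ y ∈ Icc 0 bInfty, 0 ≤ htil y) (hc : 0 ≤ c) :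
    expMoment htil m c bInfty ≤ exp (c * bInfty) * ∫ y in Ioc 0 bInfty, y ^ m * htil y := by
  rw [expMoment, ← integral_const_mul]
  refine setIntegral_mono_on ((integrableOn_pow_mul_exp_mul hcont m c).mono_set
    Ioc_subset_Icc_self) (((integrableOn_pow_mul hcont m).mono_set
      Ioc_subset_Icc_self).const_mul _) measurableSet_Ioc fun y hy => ?_
  have := hnonneg y (Ioc_subset_Icc_self hy)
  have := hy.1.le
  calc y ^ m * exp (c * y) * htil y = exp (c * y) * (y ^ m * htil y) := by ring
    _ ≤ exp (c * bInfty) * (y ^ m * htil y) := by gcongr; exact hy.2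

theorem exp_mul_le_expMoment_sub (hcont : ContinuousOn htil (Icc 0 bInfty))
    (hnonneg : ∀ y ∈ Icc 0 bInfty, 0 ≤ htil y) (hc : 0 ≤ c) {β γ : ℝ} (hx : 0 ≤ x)
    (hxβ : x ≤ β) (hβγ : β ≤ γ) (hγx' : γ ≤ x') (hx' : x' ≤ bInfty) :
    exp (c * β) * ∫ y in Ioc β γ, y ^ m * htil y ≤
      expMoment htil m c x' - expMoment htil m c x := by
  have hint : IntegrableOn (fun y => y ^ m * exp (c * y) * htil y) (Ioc x x') :=
    (integrableOn_pow_mul_exp_mul hcont m c).mono_set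
      (Ioc_subset_Icc_self.trans (Icc_subset_Icc hx hx'))
  rw [expMoment_sub_expMoment hcont hx (by linarith) hx', ← integral_const_mul]
  calc ∫ y in Ioc β γ, exp (c * β) * (y ^ m * htil y)
      ≤ ∫ y in Ioc β γ, y ^ m * exp (c * y) * htil y := by
        refine setIntegral_mono_on ?_ (hint.mono_set (Ioc_subset_Ioc hxβ hγx'))
          measurableSet_Ioc fun y hy => ?_
        · exact ((integrableOn_pow_mul hcont m).mono_set (Ioc_subset_Icc_self.trans
            (Icc_subset_Icc (hx.trans hxβ) (hγx'.trans hx')))).const_mul _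
        · have := hnonneg y ⟨hx.trans (hxβ.trans hy.1.le), hy.2.trans (hγx'.trans hx')⟩
          have := (hx.trans hxβ).trans hy.1.le
          calc exp (c * β) * (y ^ m * htil y) ≤ exp (c * y) * (y ^ m * htil y) := by
                gcongr; exact hy.1.le
            _ = y ^ m * exp (c * y) * htil y := by ring
    _ ≤ ∫ y in Ioc x x', y ^ m * exp (c * y) * htil y :=
        setIntegral_mono_set hint
          ((ae_restrict_mem measurableSet_Ioc).mono fun y hy => by
            have := hnonneg y ⟨hx.trans hy.1.le, hy.2.trans hx'⟩
            have := hx.trans_lt hy.1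
            positivity)
          (Ioc_subset_Ioc hxβ hγx').eventuallyLE

theorem setIntegral_pow_mul_pos (hcont : ContinuousOn htil (Icc 0 bInfty))
    (hnonneg : ∀ y ∈ Icc 0 bInfty, 0 ≤ htil y)
    (hnull : volume {y | y ∈ Icc (0 : ℝ) bInfty ∧ htil y = 0} = 0) {β γ : ℝ} (hβ : 0 ≤ β)
    (hβγ : β < γ) (hγ : γ ≤ bInfty) :
    0 < ∫ y in Ioc β γ, y ^ m * htil y := by
  have hsub : Ioc β γ ⊆ Icc 0 bInfty := Ioc_subset_Icc_self.trans (Icc_subset_Icc hβ hγ)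
  have hpos : ∀ y ∈ Ioc β γ, 0 ≤ y ^ m * htil y := fun y hy => by
    have := hnonneg y (hsub hy)
    have := hβ.trans hy.1.le
    positivity
  rw [setIntegral_pos_iff_support_of_nonneg_ae ((ae_restrict_mem measurableSet_Ioc).mono hpos)
    ((integrableOn_pow_mul hcont m).mono_set hsub)]
  calc (0 : ENNReal) < volume (Ioc β γ \ {y | y ∈ Icc (0 : ℝ) bInfty ∧ htil y = 0}) := by
        rw [measure_sdiff_null hnull, Real.volume_Ioc]
        exact ENNReal.ofReal_pos.2 (sub_pos.2 hβγ)
    _ ≤ volume (Function.support (fun y => y ^ m * htil y) ∩ Ioc β γ) := by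
        refine measure_mono fun y ⟨hy, hy0⟩ => ⟨?_, hy⟩
        have hy' := hsub hy
        exact mul_ne_zero (pow_ne_zero _ (hβ.trans_lt hy.1).ne') fun h => hy0 ⟨hy', h⟩

end ExpMoment

section Difference

variable {r bInfty : ℝ} {htil b b' : ℝ → ℝ} {n m : ℕ} {c : ℝ}

noncomputable def gapDensity (r : ℝ) (htil b b' : ℝ → ℝ) (n m : ℕ) (c s : ℝ) : ℝ :=
  (1 - s) ^ n * exp ((c ^ 2 / 2 - r) * s) * (expMoment htil m c (b s) - expMoment htil m c (b' s))

theorem continuousOn_expMoment_comp (hcont : ContinuousOn htil (Icc 0 bInfty))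
    (hbcont : ContinuousOn b (Iic 0)) (hbmem : ∀ s ≤ (0 : ℝ), b s ∈ Icc 0 bInfty) :
    ContinuousOn (fun s => expMoment htil m c (b s)) (Iic 0) :=
  (continuousOn_expMoment hcont).comp hbcont fun s hs => hbmem s hs

theorem Ib_sub_Ib_eq_setIntegral_gapDensity (hcont : ContinuousOn htil (Icc 0 bInfty))
    (hnonneg : ∀ y ∈ Icc 0 bInfty, 0 ≤ htil y)
    (hbcont : ContinuousOn b (Iic 0)) (hbmem : ∀ s ≤ (0 : ℝ), b s ∈ Icc 0 bInfty)
    (hbcont' : ContinuousOn b' (Iic 0)) (hbmem' : ∀ s ≤ (0 : ℝ), b' s ∈ Icc 0 bInfty)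
    (hlam : 1 < c ^ 2 / 2 - r) {J : Set ℝ} (hJ : J ⊆ Iic 0) :
    Ib r htil b J n m c - Ib r htil b' J n m c = ∫ s in J, gapDensity r htil b b' n m c s := by
  have hint : ∀ b : ℝ → ℝ, ContinuousOn b (Iic 0) → (∀ s ≤ (0 : ℝ), b s ∈ Icc 0 bInfty) →
      IntegrableOn (fun s => (1 - s) ^ n * exp ((c ^ 2 / 2 - r) * s) *
        expMoment htil m c (b s)) J := fun b hbcont hbmem =>
    (integrableOn_one_sub_pow_mul_exp_mul hlam zero_le_one
      ((continuousOn_expMoment_comp hcont hbcont hbmem).aestronglyMeasurable measurableSet_Iic)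
      fun s hs => by
        rw [abs_of_nonneg (expMoment_nonneg hnonneg (hbmem s hs).2)]
        exact expMoment_le hcont hnonneg (hbmem s hs)).mono_set hJ
  rw [Ib_eq_setIntegral_expMoment, Ib_eq_setIntegral_expMoment,
    ← integral_sub (hint b hbcont hbmem) (hint b' hbcont' hbmem')]
  congr 1
  funext s
  rw [gapDensity]
  ring

theorem continuousOn_expMoment_sub (hcont : ContinuousOn htil (Icc 0 bInfty))
    (hbcont : ContinuousOn b (Iic 0)) (hbmem : ∀ s ≤ (0 : ℝ), b s ∈ Icc 0 bInfty)
    (hbcont' : ContinuousOn b' (Iic 0)) (hbmem' : ∀ s ≤ (0 : ℝ), b' s ∈ Icc 0 bInfty) :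
    ContinuousOn (fun s => expMoment htil m c (b s) - expMoment htil m c (b' s)) (Iic 0) :=
  (continuousOn_expMoment_comp hcont hbcont hbmem).sub
    (continuousOn_expMoment_comp hcont hbcont' hbmem')

theorem integrableOn_gapDensity (hcont : ContinuousOn htil (Icc 0 bInfty))
    (hnonneg : ∀ y ∈ Icc 0 bInfty, 0 ≤ htil y)
    (hbcont : ContinuousOn b (Iic 0)) (hbmem : ∀ s ≤ (0 : ℝ), b s ∈ Icc 0 bInfty)
    (hbcont' : ContinuousOn b' (Iic 0)) (hbmem' : ∀ s ≤ (0 : ℝ), b' s ∈ Icc 0 bInfty)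
    (hlam : 1 < c ^ 2 / 2 - r) :
    IntegrableOn (gapDensity r htil b b' n m c) (Iic 0) :=
  integrableOn_one_sub_pow_mul_exp_mul hlam zero_le_one
    ((continuousOn_expMoment_sub hcont hbcont hbmem hbcont' hbmem').aestronglyMeasurable
      measurableSet_Iic)
    fun s hs => abs_expMoment_sub_le hcont hnonneg (hbmem s hs) (hbmem' s hs)

theorem abs_setIntegral_gapDensity_le (hcont : ContinuousOn htil (Icc 0 bInfty))
    (hnonneg : ∀ y ∈ Icc 0 bInfty, 0 ≤ htil y)
    (hbcont : ContinuousOn b (Iic 0)) (hbmem : ∀ s ≤ (0 : ℝ), b s ∈ Icc 0 bInfty)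
    (hbcont' : ContinuousOn b' (Iic 0)) (hbmem' : ∀ s ≤ (0 : ℝ), b' s ∈ Icc 0 bInfty)
    (hc : 0 ≤ c) (hlam : 2 ≤ c ^ 2 / 2 - r) {T : ℝ} (hT : T ≤ 0) {J : Set ℝ}
    (hJ : J ⊆ Iic T) :
    |∫ s in J, gapDensity r htil b b' n m c s| ≤ (∫ y in Ioc 0 bInfty, y ^ m * htil y) *
      n.factorial * exp (c * bInfty + 1 + (c ^ 2 / 2 - r - 1) * T) := by
  have hφ := expMoment_nonneg (m := m) (c := c) hnonneg le_rfl
  calc |∫ s in J, gapDensity r htil b b' n m c s|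
      ≤ expMoment htil m c bInfty * n.factorial * exp 1 *
          exp ((c ^ 2 / 2 - r - 1) * T) / (c ^ 2 / 2 - r - 1) :=
        abs_setIntegral_one_sub_pow_mul_exp_mul_le (by linarith) (by linarith) hJ
          (((continuousOn_expMoment_sub hcont hbcont hbmem hbcont' hbmem').mono
            (Iic_subset_Iic.2 hT)).aestronglyMeasurable measurableSet_Iic)
          fun s hs => abs_expMoment_sub_le hcont hnonneg (hbmem s (hs.trans hT))
            (hbmem' s (hs.trans hT))
    _ ≤ expMoment htil m c bInfty * n.factorial * exp 1 * exp ((c ^ 2 / 2 - r - 1) * T) :=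
        div_le_self (by positivity) (by linarith)
    _ ≤ exp (c * bInfty) * (∫ y in Ioc 0 bInfty, y ^ m * htil y) * n.factorial * exp 1 *
          exp ((c ^ 2 / 2 - r - 1) * T) := by
        gcongr
        exact expMoment_le_exp_mul hcont hnonneg hc
    _ = (∫ y in Ioc 0 bInfty, y ^ m * htil y) * n.factorial *
          exp (c * bInfty + 1 + (c ^ 2 / 2 - r - 1) * T) := by
        rw [exp_add, exp_add]; ring

theorem le_setIntegral_gapDensity (hcont : ContinuousOn htil (Icc 0 bInfty))
    (hnonneg : ∀ y ∈ Icc 0 bInfty, 0 ≤ htil y)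
    (hbcont : ContinuousOn b (Iic 0)) (hbanti : AntitoneOn b (Iic 0))
    (hbmem : ∀ s ≤ (0 : ℝ), b s ∈ Icc 0 bInfty)
    (hbcont' : ContinuousOn b' (Iic 0)) (hbmem' : ∀ s ≤ (0 : ℝ), b' s ∈ Icc 0 bInfty)
    (hc : 0 ≤ c) (hlam : 1 < c ^ 2 / 2 - r) {t δ β : ℝ} (ht : t ≤ 0) (hδ : 0 < δ)
    (hb'β : ∀ s ∈ Ioc (t - δ) t, b' s ≤ β) (hβb : β ≤ b t) :
    (∫ y in Ioc β (b t), y ^ m * htil y) * (δ / 2) *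
        exp (c * β + (c ^ 2 / 2 - r) * (t - δ / 2)) ≤
      ∫ s in Ioc (t - δ) t, gapDensity r htil b b' n m c s := by
  have hgap : ∀ s ∈ Ioc (t - δ) t, exp (c * β) * ∫ y in Ioc β (b t), y ^ m * htil y ≤
      expMoment htil m c (b s) - expMoment htil m c (b' s) := fun s hs => by
    have hs0 : s ≤ 0 := hs.2.trans ht
    exact exp_mul_le_expMoment_sub hcont hnonneg hc (hbmem' s hs0).1 (hb'β s hs) hβb
      (hbanti hs0 ht hs.2) (hbmem s hs0).2
  have hA : 0 ≤ ∫ y in Ioc β (b t), y ^ m * htil y := by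
    simpa using setIntegral_pow_mul_exp_mul_nonneg (m := m) (c := 0) hnonneg
      (((hbmem' t ht).1.trans (hb'β t ⟨by linarith, le_rfl⟩))) (hbmem t ht).2
  calc (∫ y in Ioc β (b t), y ^ m * htil y) * (δ / 2) *
        exp (c * β + (c ^ 2 / 2 - r) * (t - δ / 2))
      = exp (c * β) * (∫ y in Ioc β (b t), y ^ m * htil y) *
          exp ((c ^ 2 / 2 - r) * (t - δ / 2)) * (t - (t - δ / 2)) := by
        rw [exp_add]; ring
    _ ≤ ∫ s in Ioc (t - δ) t, gapDensity r htil b b' n m c s :=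
        le_setIntegral_one_sub_pow_mul_exp_mul (by linarith) ht (by linarith) (by linarith)
          (by positivity) hgap
          ((integrableOn_gapDensity hcont hnonneg hbcont hbmem hbcont' hbmem' hlam).mono_set
            (Ioc_subset_Iic_self.trans (Iic_subset_Iic.2 ht)))

theorem Ib_sub_Ib_div_Ib_sub_Ib_eq (hcont : ContinuousOn htil (Icc 0 bInfty))
    (hnonneg : ∀ y ∈ Icc 0 bInfty, 0 ≤ htil y)
    (hbcont : ContinuousOn b (Iic 0)) (hbmem : ∀ s ≤ (0 : ℝ), b s ∈ Icc 0 bInfty)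
    (hbcont' : ContinuousOn b' (Iic 0)) (hbmem' : ∀ s ≤ (0 : ℝ), b' s ∈ Icc 0 bInfty)
    (hlam : 1 < c ^ 2 / 2 - r) {t δ ε : ℝ} (ht : t ≤ 0) (hδ : 0 ≤ δ) (hδε : δ ≤ ε) :
    (Ib r htil b (Iic t) n m c - Ib r htil b' (Iic t) n m c) /
        (Ib r htil b (Icc (t - ε) t) n m c - Ib r htil b' (Icc (t - ε) t) n m c) =
      ((∫ s in Iic (t - δ), gapDensity r htil b b' n m c s) +
          ∫ s in Ioc (t - δ) t, gapDensity r htil b b' n m c s) /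
        ((∫ s in Ioc (t - ε) (t - δ), gapDensity r htil b b' n m c s) +
          ∫ s in Ioc (t - δ) t, gapDensity r htil b b' n m c s) := by
  have hint := integrableOn_gapDensity (n := n) (m := m) hcont hnonneg hbcont hbmem hbcont'
    hbmem' hlam
  have hIoc : ∀ a, Ioc a t ⊆ Iic 0 := fun a => Ioc_subset_Iic_self.trans (Iic_subset_Iic.2 ht)
  rw [Ib_sub_Ib_eq_setIntegral_gapDensity hcont hnonneg hbcont hbmem hbcont' hbmem' hlam
      (Iic_subset_Iic.2 ht),
    Ib_sub_Ib_eq_setIntegral_gapDensity hcont hnonneg hbcont hbmem hbcont' hbmem' hlam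
      fun s hs => hs.2.trans ht,
    integral_Icc_eq_integral_Ioc, ← Iic_union_Ioc_eq_Iic (by linarith : t - δ ≤ t),
    ← Ioc_union_Ioc_eq_Ioc (by linarith : t - ε ≤ t - δ) (by linarith : t - δ ≤ t),
    setIntegral_union (Iic_disjoint_Ioc le_rfl) measurableSet_Ioc
      (hint.mono_set (Iic_subset_Iic.2 (by linarith))) (hint.mono_set (hIoc _)),
    setIntegral_union (Ioc_disjoint_Ioc_of_le le_rfl) measurableSet_Ioc
      (hint.mono_set (Ioc_subset_Iic_self.trans (Iic_subset_Iic.2 (by linarith))))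
      (hint.mono_set (hIoc _))]

theorem exists_forall_Ioc_lt_of_continuousWithinAt {f : ℝ → ℝ} {t β ε : ℝ}
    (hf : ContinuousWithinAt f (Iic t) t) (hfβ : f t < β) (hε : 0 < ε) :
    ∃ δ > 0, δ ≤ ε ∧ ∀ s ∈ Ioc (t - δ) t, f s < β := by
  obtain ⟨l, hl, hsub⟩ := mem_nhdsLE_iff_exists_Ioc_subset.1 (hf.eventually (gt_mem_nhds hfβ))
  exact ⟨min (t - l) ε, lt_min (sub_pos.2 hl) hε, min_le_right _ _,
    fun s hs => hsub ⟨by linarith [min_le_left (t - l) ε, hs.1], hs.2⟩⟩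

theorem tendsto_Ib_sub_div_Ib_sub_of_lt (hcont : ContinuousOn htil (Icc 0 bInfty))
    (hnonneg : ∀ y ∈ Icc 0 bInfty, 0 ≤ htil y)
    (hnull : volume {y | y ∈ Icc (0 : ℝ) bInfty ∧ htil y = 0} = 0)
    (hbcont : ContinuousOn b (Iic 0)) (hbanti : AntitoneOn b (Iic 0))
    (hbmem : ∀ s ≤ (0 : ℝ), b s ∈ Icc 0 bInfty)
    (hbcont' : ContinuousOn b' (Iic 0)) (hbmem' : ∀ s ≤ (0 : ℝ), b' s ∈ Icc 0 bInfty)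
    {t : ℝ} (ht : t ≤ 0) (hlt : b' t < b t) {ε : ℝ} (hε : 0 < ε) :
    Tendsto (fun c => (Ib r htil b (Iic t) n m c - Ib r htil b' (Iic t) n m c) /
      (Ib r htil b (Icc (t - ε) t) n m c - Ib r htil b' (Icc (t - ε) t) n m c)) atTop (𝓝 1) := by
  obtain ⟨β, hb'β, hβb⟩ := exists_between hlt
  obtain ⟨δ, hδ, hδε, hb'δ⟩ := exists_forall_Ioc_lt_of_continuousWithinAt
    ((hbcont' t ht).mono (Iic_subset_Iic.2 ht)) hb'β hε
  have hA : 0 < ∫ y in Ioc β (b t), y ^ m * htil y :=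
    setIntegral_pow_mul_pos hcont hnonneg hnull ((hbmem' t ht).1.trans hb'β.le) hβb
      (hbmem t ht).2
  have hlarge : ∀ᶠ c : ℝ in atTop, 0 ≤ c ∧ 2 ≤ c ^ 2 / 2 - r :=
    (eventually_ge_atTop 0).and <| (tendsto_atTop_add_const_right atTop (-r)
      ((tendsto_pow_atTop two_ne_zero).atTop_div_const two_pos)).eventually_ge_atTop 2
  -- The exponent of `u / v` is `(b∞ - β) c - λ δ / 2 + const`, with `λ δ / 2 = δ c² / 4 - r δ / 2`.
  have huv := tendsto_mul_exp_div_mul_exp_atTop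
    ((∫ y in Ioc 0 bInfty, y ^ m * htil y) * n.factorial)
    ((∫ y in Ioc β (b t), y ^ m * htil y) * (δ / 2))
    (f := fun c => c * bInfty + 1 + (c ^ 2 / 2 - r - 1) * (t - δ))
    (g := fun c => c * β + (c ^ 2 / 2 - r) * (t - δ / 2))
    ((tendsto_quadratic_atBot (a := -(δ / 4)) (by linarith) (bInfty - β)
      (1 - (t - δ) + r * δ / 2)).congr fun c => by ring)
  refine (tendsto_add_div_add_of_abs_le
    (P := fun c => ∫ s in Ioc (t - δ) t, gapDensity r htil b b' n m c s)
    (E₁ := fun c => ∫ s in Iic (t - δ), gapDensity r htil b b' n m c s)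
    (E₂ := fun c => ∫ s in Ioc (t - ε) (t - δ), gapDensity r htil b b' n m c s)
    (hlarge.mono fun c ⟨hc, hlam⟩ => ⟨by positivity, le_setIntegral_gapDensity hcont hnonneg
      hbcont hbanti hbmem hbcont' hbmem' hc (by linarith) ht hδ (fun s hs => (hb'δ s hs).le)
      hβb.le⟩)
    (hlarge.mono fun c ⟨hc, hlam⟩ => abs_setIntegral_gapDensity_le hcont hnonneg hbcont hbmem
      hbcont' hbmem' hc hlam (by linarith) Subset.rfl)
    (hlarge.mono fun c ⟨hc, hlam⟩ => abs_setIntegral_gapDensity_le hcont hnonneg hbcont hbmem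
      hbcont' hbmem' hc hlam (by linarith) fun s hs => hs.2) huv).congr' ?_
  filter_upwards [hlarge] with c ⟨hc, hlam⟩
  exact (Ib_sub_Ib_div_Ib_sub_Ib_eq hcont hnonneg hbcont hbmem hbcont' hbmem' (by linarith) ht
    hδ.le hδε).symm

end Difference

theorem stmt16_general (r bInfty : ℝ)
    (htil : ℝ → ℝ) (hcont : ContinuousOn htil (Set.Icc 0 bInfty))
    (hnonneg : ∀ y ∈ Set.Icc 0 bInfty, 0 ≤ htil y)
    (hnull : volume {y | y ∈ Set.Icc (0 : ℝ) bInfty ∧ htil y = 0} = 0)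
    (b : ℝ → ℝ) (hbcont : ContinuousOn b (Set.Iic 0))
    (hbanti : AntitoneOn b (Set.Iic 0))
    (hbmem : ∀ s ≤ (0 : ℝ), b s ∈ Set.Icc 0 bInfty)
    (b' : ℝ → ℝ) (hbcont' : ContinuousOn b' (Set.Iic 0))
    (hbanti' : AntitoneOn b' (Set.Iic 0))
    (hbmem' : ∀ s ≤ (0 : ℝ), b' s ∈ Set.Icc 0 bInfty)
    (t : ℝ) (ht : t ≤ 0) (hne : b t ≠ b' t)
    (ε : ℝ) (hε : 0 < ε) (n m : ℕ) :
    Filter.Tendsto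
      (fun c => (Ib r htil b (Set.Iic t) n m c - Ib r htil b' (Set.Iic t) n m c) /
        (Ib r htil b (Set.Icc (t - ε) t) n m c - Ib r htil b' (Set.Icc (t - ε) t) n m c))
      Filter.atTop (nhds 1) := by
  rcases hne.lt_or_gt with h | h
  · refine (tendsto_Ib_sub_div_Ib_sub_of_lt (r := r) (n := n) (m := m) hcont hnonneg hnull
      hbcont' hbanti' hbmem' hbcont hbmem ht h hε).congr fun c => ?_
    rw [← neg_sub (Ib r htil b' (Iic t) n m c), ← neg_sub (Ib r htil b' (Icc (t - ε) t) n m c),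
      neg_div_neg_eq]
  · exact tendsto_Ib_sub_div_Ib_sub_of_lt hcont hnonneg hnull hbcont hbanti hbmem hbcont' hbmem'
      ht h hε

theorem stmt16 (r bInfty : ℝ) (hr : 0 < r) (hb : 0 < bInfty)
    (htil : ℝ → ℝ) (hcont : ContinuousOn htil (Set.Icc 0 bInfty))
    (hnonneg : ∀ y ∈ Set.Icc 0 bInfty, 0 ≤ htil y)
    (hnull : volume {y | y ∈ Set.Icc (0 : ℝ) bInfty ∧ htil y = 0} = 0)
    (b : ℝ → ℝ) (hbcont : ContinuousOn b (Set.Iic 0))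
    (hbanti : AntitoneOn b (Set.Iic 0))
    (hbmem : ∀ s ≤ (0 : ℝ), b s ∈ Set.Icc 0 bInfty)
    (hbpos : ∀ s < (0 : ℝ), 0 < b s)
    (b' : ℝ → ℝ) (hbcont' : ContinuousOn b' (Set.Iic 0))
    (hbanti' : AntitoneOn b' (Set.Iic 0))
    (hbmem' : ∀ s ≤ (0 : ℝ), b' s ∈ Set.Icc 0 bInfty)
    (hbpos' : ∀ s < (0 : ℝ), 0 < b' s)
    (t : ℝ) (ht : t ≤ 0) (hne : b t ≠ b' t)
    (ε : ℝ) (hε : 0 < ε) (n m : ℕ) :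
    Filter.Tendsto
      (fun c => (Ib r htil b (Set.Iic t) n m c - Ib r htil b' (Set.Iic t) n m c) /
        (Ib r htil b (Set.Icc (t - ε) t) n m c - Ib r htil b' (Set.Icc (t - ε) t) n m c))
      Filter.atTop (nhds 1) :=
  stmt16_general r bInfty htil hcont hnonneg hnull b hbcont hbanti hbmem b' hbcont' hbanti' hbmem' t
    ht hne ε hε n m
end

section
/- For every M > 0, the linear span of the functions (s, y) ↦ e^s (−s)^n y^m with n, m ∈ ℕ (equivalently, the set of functions (s, y) ↦ e^s q(−s, y) with q ranging over real polynomials in two variables) is dense in L²((−∞, 0] × [0, M]) with respect to Lebesgue measure. -/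
open MeasureTheory Set Real Filter MvPolynomial
open scoped ENNReal NNReal


-- exp integrable on Iic 0
lemma myIntExpIic {c : ℝ} (hc : 0 < c) :
    IntegrableOn (fun s : ℝ => Real.exp (c * s)) (Set.Iic (0:ℝ)) := by
  have h1 : IntegrableOn (fun x : ℝ => Real.exp (-c * x)) (Set.Ici (0:ℝ)) :=
    (integrableOn_Ici_iff_integrableOn_Ioi (by simp)).2 (exp_neg_integrableOn_Ioi 0 hc)
  have := ((Measure.measurePreserving_neg (volume : Measure ℝ)).integrableOn_comp_preimage
      (Homeomorph.neg ℝ).measurableEmbedding).2 h1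
  simpa [Function.comp_def, neg_preimage, neg_Ici, neg_zero, mul_comm] using this

lemma myPowLeExp {x : ℝ} (hx : 0 ≤ x) (n : ℕ) : x ^ n ≤ n.factorial * Real.exp x := by
  have h := Real.sum_le_exp_of_nonneg hx (n+1)
  have h2 : x ^ n / n.factorial ≤ ∑ i ∈ Finset.range (n+1), x ^ i / i.factorial := by
    exact Finset.single_le_sum (f := fun i => x ^ i / (i.factorial:ℝ))
      (fun i _ => by positivity) (Finset.self_mem_range_succ n)
  have hn : (0:ℝ) < n.factorial := by positivity
  rw [div_le_iff₀ hn] at h2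
  calc x ^ n ≤ (∑ i ∈ Finset.range (n+1), x ^ i / i.factorial) * n.factorial := h2
    _ ≤ Real.exp x * n.factorial := by
        apply mul_le_mul_of_nonneg_right h hn.le
    _ = n.factorial * Real.exp x := mul_comm _ _

-- exp * power integrable on Iic 0
lemma myIntExpPowIic {a : ℝ} (ha : 0 < a) (n : ℕ) :
    IntegrableOn (fun s : ℝ => Real.exp (a * s) * (-s) ^ n) (Set.Iic (0:ℝ)) := by
  apply Integrable.mono' ((myIntExpIic (c := a/2) (by linarith)).const_mul
    (n.factorial * (2/a) ^ n))
  · exact (((Real.continuous_exp.comp (continuous_const.mul continuous_id)).mul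
      ((continuous_neg.pow n))).aestronglyMeasurable)
  · filter_upwards [ae_restrict_mem measurableSet_Iic] with s (hs : s ≤ 0)
    have hx : (0:ℝ) ≤ -s := by linarith
    have key : ((a/2) * (-s)) ^ n ≤ n.factorial * Real.exp ((a/2) * (-s)) :=
      myPowLeExp (by positivity) n
    have h1 : (-s) ^ n ≤ n.factorial * (2/a) ^ n * Real.exp (-(a/2) * s) := by
      have e1 : ((a/2) * (-s)) ^ n = (a/2) ^ n * (-s) ^ n := mul_pow _ _ _
      rw [e1] at key
      have h2 : (0:ℝ) < (a/2) ^ n := by positivity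
      have e2 : Real.exp ((a/2) * (-s)) = Real.exp (-(a/2) * s) := by ring_nf
      rw [e2] at key
      have e3 : (2/a) ^ n * ((a/2) ^ n * (-s) ^ n) = (-s) ^ n := by
        rw [← mul_assoc, ← mul_pow]
        field_simp
        simp
      calc (-s) ^ n = (2/a) ^ n * ((a/2) ^ n * (-s) ^ n) := e3.symm
        _ ≤ (2/a) ^ n * (n.factorial * Real.exp (-(a/2) * s)) :=
            mul_le_mul_of_nonneg_left key (by positivity)
        _ = n.factorial * (2/a) ^ n * Real.exp (-(a/2) * s) := by ring
    have hnorm : ‖Real.exp (a * s) * (-s) ^ n‖ = Real.exp (a * s) * (-s)^n := by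
      rw [Real.norm_eq_abs, abs_mul, abs_of_pos (Real.exp_pos _), abs_of_nonneg (by positivity)]
    rw [hnorm]
    calc Real.exp (a*s) * (-s)^n
        ≤ Real.exp (a*s) * (n.factorial * (2/a) ^ n * Real.exp (-(a/2)*s)) := by
          apply mul_le_mul_of_nonneg_left h1 (Real.exp_pos _).le
      _ = n.factorial * (2/a)^n * Real.exp (a/2 * s) := by
          rw [mul_comm (Real.exp (a*s)) _, mul_assoc, ← Real.exp_add]; ring_nf


noncomputable def myMu (M : ℝ) : Measure (ℝ × ℝ) :=
  volume.restrict (Set.Iic (0 : ℝ) ×ˢ Set.Icc (0 : ℝ) M)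

lemma myMuEq (M : ℝ) :
    myMu M = (volume.restrict (Set.Iic (0:ℝ))).prod (volume.restrict (Set.Icc (0:ℝ) M)) := by
  rw [myMu, Measure.prod_restrict, ← Measure.volume_eq_prod ℝ ℝ]

lemma myContEval (q : MvPolynomial (Fin 2) ℝ) {f g : ℝ × ℝ → ℝ}
    (hf : Continuous f) (hg : Continuous g) :
    Continuous fun p : ℝ × ℝ => MvPolynomial.eval ![f p, g p] q := by
  induction q using MvPolynomial.induction_on with
  | C a => simpa using continuous_const
  | add p q hp hq => simp only [map_add]; exact hp.add hq
  | mul_X p n hp =>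
      simp only [map_mul, eval_X]
      fin_cases n
      · exact hp.mul hf
      · exact hp.mul hg

-- Lemma A
lemma myIntA {M a : ℝ} (ha : 0 < a) (q : MvPolynomial (Fin 2) ℝ) :
    Integrable (fun p : ℝ × ℝ => Real.exp (a * p.1) * MvPolynomial.eval ![-p.1, p.2] q)
      (myMu M) := by
  rw [myMuEq]
  have heq : (fun p : ℝ × ℝ => Real.exp (a * p.1) * MvPolynomial.eval ![-p.1, p.2] q)
      = fun p : ℝ × ℝ => ∑ d ∈ q.support,
          ((MvPolynomial.coeff d q) * (Real.exp (a * p.1) * (-p.1) ^ (d 0))) * (p.2 ^ (d 1)) := by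
    funext p
    rw [MvPolynomial.eval_eq', Finset.mul_sum]
    congr 1
    funext d
    rw [Fin.prod_univ_two]
    simp only [Matrix.cons_val_zero, Matrix.cons_val_one, Matrix.head_cons]
    ring
  rw [heq]
  apply integrable_finset_sum
  intro d _
  exact (((myIntExpPowIic ha (d 0)).const_mul (MvPolynomial.coeff d q)).mul_prod
    ((continuous_pow (d 1)).integrableOn_Icc))
-- pointwise bound: |(1 + s/N)^N| ≤ exp (-s * (exp 1)⁻¹) for s ≤ 0
lemma myPowBound {s : ℝ} (hs : s ≤ 0) (N : ℕ) :
    |(1 + s / N) ^ N| ≤ Real.exp (-s * (Real.exp 1)⁻¹) := by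
  set x : ℝ := -s with hx
  have hx0 : 0 ≤ x := by simp [hx]; linarith
  have hgoal : (1 + s / N) = (1 - x / N) := by rw [hx]; ring
  rw [hgoal]
  have htarget : Real.exp (-s * (Real.exp 1)⁻¹) = Real.exp (x * (Real.exp 1)⁻¹) := by rw [hx]
  rw [htarget]
  have h1le : (1:ℝ) ≤ Real.exp (x * (Real.exp 1)⁻¹) := by
    apply Real.one_le_exp
    positivity
  rcases Nat.eq_zero_or_pos N with hN | hN
  · simpa [hN] using h1le
  have hNpos : (0:ℝ) < N := by exact_mod_cast hN
  rcases le_or_gt x N with hxN | hxN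
  · have h0 : 0 ≤ 1 - x / N := by
      rw [sub_nonneg, div_le_one hNpos]; exact hxN
    have h1 : 1 - x / N ≤ 1 := by
      have : 0 ≤ x / N := by positivity
      linarith
    rw [abs_of_nonneg (pow_nonneg h0 _)]
    calc (1 - x/N) ^ N ≤ 1 ^ N := pow_le_pow_left₀ h0 h1 N
      _ = 1 := one_pow N
      _ ≤ _ := h1le
  · -- N < x
    have hu : (1:ℝ) < x / N := by rw [lt_div_iff₀ hNpos]; linarith
    have hupos : (0:ℝ) < x / N := by linarith
    have habs : |1 - x / N| ≤ x / N := by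
      rw [abs_of_nonpos (by linarith)]; linarith
    have hlog : Real.log (x / N) ≤ (x / N) * (Real.exp 1)⁻¹ := by
      have h := Real.add_one_le_exp (Real.log (x / N) - 1)
      rw [Real.exp_sub, Real.exp_log hupos] at h
      have : Real.log (x/N) ≤ (x/N) / Real.exp 1 := by linarith
      rwa [div_eq_mul_inv] at this
    calc |(1 - x/N) ^ N| = |1 - x/N| ^ N := abs_pow _ _
      _ ≤ (x / N) ^ N := pow_le_pow_left₀ (abs_nonneg _) habs N
      _ = Real.exp (N * Real.log (x / N)) := by
          rw [Real.exp_nat_mul, Real.exp_log hupos]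
      _ ≤ Real.exp (x * (Real.exp 1)⁻¹) := by
          apply Real.exp_le_exp.2
          calc (N:ℝ) * Real.log (x / N) ≤ N * ((x / N) * (Real.exp 1)⁻¹) :=
                mul_le_mul_of_nonneg_left hlog hNpos.le
            _ = x * (Real.exp 1)⁻¹ := by
                field_simp
lemma myExpInvLt : (0:ℝ) < 1 - (Real.exp 1)⁻¹ := by
  have h : (1:ℝ) < Real.exp 1 := by
    have := Real.add_one_le_exp (1:ℝ)
    linarith
  have : (Real.exp 1)⁻¹ < 1 := by
    rw [inv_lt_one_iff₀]; right; exact h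
  linarith

lemma myTendstoB (M : ℝ) (q : MvPolynomial (Fin 2) ℝ) :
    Filter.Tendsto (fun N : ℕ => eLpNorm (fun p : ℝ × ℝ =>
        Real.exp p.1 * (Real.exp p.1 - (1 + p.1 / (N:ℝ)) ^ N)
          * MvPolynomial.eval ![-p.1, p.2] q) 2 (myMu M))
      Filter.atTop (nhds 0) := by
  set c : ℝ := 1 - (Real.exp 1)⁻¹ with hcdef
  have hc : 0 < c := myExpInvLt
  set Q : ℝ × ℝ → ℝ := fun p => MvPolynomial.eval ![-p.1, p.2] q with hQdef
  have contQ : Continuous Q := myContEval q continuous_fst.neg continuous_snd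
  set fN : ℕ → ℝ × ℝ → ℝ := fun N p =>
    Real.exp p.1 * (Real.exp p.1 - (1 + p.1 / (N:ℝ)) ^ N) * Q p with hfNdef
  have contfN : ∀ N, Continuous (fN N) := by
    intro N
    exact ((Real.continuous_exp.comp continuous_fst).mul
      ((Real.continuous_exp.comp continuous_fst).sub
        ((continuous_const.add (continuous_fst.div_const _)).pow N))).mul contQ
  have hel : ∀ N, eLpNorm (fN N) 2 (myMu M)
      = (∫⁻ p, (‖fN N p‖₊ : ℝ≥0∞) ^ (2:ℝ) ∂(myMu M)) ^ (1/(2:ℝ)) := by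
    intro N
    rw [eLpNorm_eq_lintegral_rpow_enorm_toReal two_ne_zero ENNReal.ofNat_ne_top]
    norm_num
    rfl
  have hT : Filter.Tendsto (fun N => ∫⁻ p, (‖fN N p‖₊ : ℝ≥0∞) ^ (2:ℝ) ∂(myMu M))
      Filter.atTop (nhds 0) := by
    have h0 : (0:ℝ≥0∞) = ∫⁻ _ , (0:ℝ≥0∞) ∂(myMu M) := by rw [lintegral_zero]
    rw [h0]
    apply tendsto_lintegral_of_dominated_convergence
      (bound := fun p => (‖2 * Real.exp (c * p.1) * Q p‖₊ : ℝ≥0∞) ^ (2:ℝ))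
    · intro N
      fun_prop
    · intro N
      have hSmeas : MeasurableSet (Set.Iic (0:ℝ) ×ˢ Set.Icc (0:ℝ) M) :=
        measurableSet_Iic.prod measurableSet_Icc
      rw [myMu] at *
      filter_upwards [ae_restrict_mem hSmeas] with p hp
      have hp1 : p.1 ≤ 0 := hp.1
      have habs : |fN N p| ≤ |2 * Real.exp (c * p.1) * Q p| := by
        have h1 : |Real.exp p.1 - (1 + p.1 / (N:ℝ)) ^ N| ≤ 2 * Real.exp (-p.1 * (Real.exp 1)⁻¹) := by
          have hb := myPowBound hp1 N
          have he : Real.exp p.1 ≤ Real.exp (-p.1 * (Real.exp 1)⁻¹) := by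
            apply Real.exp_le_exp.2
            have : 0 ≤ -p.1 * (Real.exp 1)⁻¹ := mul_nonneg (by linarith) (by positivity)
            linarith
          calc |Real.exp p.1 - (1 + p.1 / (N:ℝ)) ^ N|
              ≤ |Real.exp p.1| + |(1 + p.1 / (N:ℝ)) ^ N| := abs_sub _ _
            _ ≤ Real.exp (-p.1 * (Real.exp 1)⁻¹) + Real.exp (-p.1 * (Real.exp 1)⁻¹) := by
                apply add_le_add _ hb
                rw [abs_of_pos (Real.exp_pos _)]; exact he
            _ = 2 * Real.exp (-p.1 * (Real.exp 1)⁻¹) := by ring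
        have hkey : Real.exp p.1 * (2 * Real.exp (-p.1 * (Real.exp 1)⁻¹))
            = 2 * Real.exp (c * p.1) := by
          rw [hcdef, show (1 - (Real.exp 1)⁻¹) * p.1 = p.1 + (-p.1 * (Real.exp 1)⁻¹) by ring,
            Real.exp_add]
          ring
        calc |fN N p| = Real.exp p.1 * |Real.exp p.1 - (1 + p.1 / (N:ℝ)) ^ N| * |Q p| := by
              rw [hfNdef]
              simp only [abs_mul, abs_of_pos (Real.exp_pos _)]
          _ ≤ Real.exp p.1 * (2 * Real.exp (-p.1 * (Real.exp 1)⁻¹)) * |Q p| := by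
              apply mul_le_mul_of_nonneg_right _ (abs_nonneg _)
              exact mul_le_mul_of_nonneg_left h1 (Real.exp_pos _).le
          _ = 2 * Real.exp (c * p.1) * |Q p| := by rw [hkey]
          _ = |2 * Real.exp (c * p.1) * Q p| := by
              rw [abs_mul, abs_of_pos (by positivity : (0:ℝ) < 2 * Real.exp (c * p.1))]
      apply ENNReal.rpow_le_rpow _ (by norm_num : (0:ℝ) ≤ 2)
      rw [← enorm_eq_nnnorm, ← enorm_eq_nnnorm, Real.enorm_eq_ofReal_abs, Real.enorm_eq_ofReal_abs]
      exact ENNReal.ofReal_le_ofReal habs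
    · -- finiteness of the bound integral
      have hint : Integrable (fun p : ℝ × ℝ => (2 * Real.exp (c * p.1) * Q p) ^ 2) (myMu M) := by
        have h2c : (0:ℝ) < 2 * c := by linarith
        have := (myIntA (M := M) h2c (q * q)).const_mul 4
        apply this.congr
        filter_upwards with p
        rw [hQdef]
        simp only [map_mul]
        rw [mul_pow, mul_pow, ← Real.exp_nat_mul]
        push_cast
        ring_nf
      have heq : ∀ p : ℝ × ℝ, (‖2 * Real.exp (c * p.1) * Q p‖₊ : ℝ≥0∞) ^ (2:ℝ)
          = (‖(2 * Real.exp (c * p.1) * Q p) ^ 2‖₊ : ℝ≥0∞) := by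
        intro p
        rw [← enorm_eq_nnnorm, ← enorm_eq_nnnorm, Real.enorm_eq_ofReal_abs, Real.enorm_eq_ofReal_abs,
          ENNReal.ofReal_rpow_of_nonneg (abs_nonneg _) (by norm_num : (0:ℝ) ≤ 2)]
        congr 1
        rw [show ((2:ℝ)) = ((2:ℕ):ℝ) by norm_num, Real.rpow_natCast, sq_abs,
          abs_of_nonneg (sq_nonneg _)]
      rw [lintegral_congr heq]
      exact hint.hasFiniteIntegral.ne
    · -- pointwise convergence
      filter_upwards with p
      have hreal : Filter.Tendsto (fun N : ℕ => fN N p) Filter.atTop (nhds 0) := by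
        have h1 : Filter.Tendsto (fun N : ℕ => Real.exp p.1 - (1 + p.1 / (N:ℝ)) ^ N)
            Filter.atTop (nhds 0) := by
          have := tendsto_const_nhds (x := Real.exp p.1) (f := Filter.atTop (α := ℕ))
          have h2 := this.sub (Real.tendsto_one_add_div_pow_exp p.1)
          simpa using h2
        have h3 := (h1.const_mul (Real.exp p.1)).mul_const (Q p)
        simp only [mul_zero, zero_mul] at h3
        exact h3
      have hφ : Filter.Tendsto (fun x : ℝ => (‖x‖₊ : ℝ≥0∞) ^ (2:ℝ)) (nhds 0) (nhds 0) := by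
        have hc2 : Continuous fun x : ℝ => (‖x‖₊ : ℝ≥0∞) ^ (2:ℝ) :=
          ENNReal.continuous_rpow_const.comp (ENNReal.continuous_coe.comp continuous_nnnorm)
        have := hc2.tendsto 0
        simpa [ENNReal.zero_rpow_of_pos (by norm_num : (0:ℝ) < 2)] using this
      exact hφ.comp hreal
  -- conclude
  show Filter.Tendsto (fun N => eLpNorm (fN N) 2 (myMu M)) Filter.atTop (nhds 0)
  simp_rw [hel]
  have hcomp := ((ENNReal.continuous_rpow_const (y := 1/(2:ℝ))).tendsto 0).comp hT
  simpa [Function.comp_def, ENNReal.zero_rpow_of_pos (by norm_num : (0:ℝ) < 1/2)] using hcomp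
lemma myContDiff1 (P q1 : MvPolynomial (Fin 2) ℝ) :
    Continuous (fun p : ℝ × ℝ => Real.exp p.1 * MvPolynomial.eval ![Real.exp p.1, p.2] P
      - Real.exp p.1 * MvPolynomial.eval ![-p.1, p.2] q1) :=
  ((Real.continuous_exp.comp continuous_fst).mul
      (myContEval P (Real.continuous_exp.comp continuous_fst) continuous_snd)).sub
    ((Real.continuous_exp.comp continuous_fst).mul
      (myContEval q1 continuous_fst.neg continuous_snd))

lemma myMain (M : ℝ) (hM : 0 < M) (P : MvPolynomial (Fin 2) ℝ) :
    ∀ ε : ℝ≥0∞, 0 < ε → ε ≠ ⊤ → ∃ q : MvPolynomial (Fin 2) ℝ,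
      eLpNorm (fun p : ℝ × ℝ => Real.exp p.1 * MvPolynomial.eval ![Real.exp p.1, p.2] P
        - Real.exp p.1 * MvPolynomial.eval ![-p.1, p.2] q) 2 (myMu M) < ε := by
  have hSmeas : MeasurableSet (Set.Iic (0:ℝ) ×ˢ Set.Icc (0:ℝ) M) :=
    measurableSet_Iic.prod measurableSet_Icc
  induction P using MvPolynomial.induction_on with
  | C a =>
      intro ε hε _
      refine ⟨MvPolynomial.C a, ?_⟩
      have h : (fun p : ℝ × ℝ => Real.exp p.1 * MvPolynomial.eval ![Real.exp p.1, p.2]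
          (MvPolynomial.C a) - Real.exp p.1 * MvPolynomial.eval ![-p.1, p.2]
          (MvPolynomial.C a)) = fun _ : ℝ × ℝ => (0:ℝ) := by
        funext p; simp
      rw [h, eLpNorm_zero']
      exact hε
  | add P1 P2 ih1 ih2 =>
      intro ε hε hεt
      have hε2 : (0:ℝ≥0∞) < ε / 2 := ENNReal.half_pos hε.ne'
      have hε2t : ε / 2 ≠ ⊤ := (lt_of_le_of_lt (ENNReal.half_le_self) hεt.lt_top).ne
      obtain ⟨q1, hq1⟩ := ih1 (ε / 2) hε2 hε2t
      obtain ⟨q2, hq2⟩ := ih2 (ε / 2) hε2 hε2t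
      refine ⟨q1 + q2, ?_⟩
      have h : (fun p : ℝ × ℝ => Real.exp p.1 * MvPolynomial.eval ![Real.exp p.1, p.2] (P1 + P2)
          - Real.exp p.1 * MvPolynomial.eval ![-p.1, p.2] (q1 + q2))
          = (fun p : ℝ × ℝ => (Real.exp p.1 * MvPolynomial.eval ![Real.exp p.1, p.2] P1
              - Real.exp p.1 * MvPolynomial.eval ![-p.1, p.2] q1)
            + (Real.exp p.1 * MvPolynomial.eval ![Real.exp p.1, p.2] P2
              - Real.exp p.1 * MvPolynomial.eval ![-p.1, p.2] q2)) := by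
        funext p; simp only [map_add]; ring
      rw [h]
      calc eLpNorm _ 2 (myMu M)
          ≤ eLpNorm (fun p : ℝ × ℝ => Real.exp p.1 * MvPolynomial.eval ![Real.exp p.1, p.2] P1
              - Real.exp p.1 * MvPolynomial.eval ![-p.1, p.2] q1) 2 (myMu M)
            + eLpNorm (fun p : ℝ × ℝ => Real.exp p.1 * MvPolynomial.eval ![Real.exp p.1, p.2] P2
              - Real.exp p.1 * MvPolynomial.eval ![-p.1, p.2] q2) 2 (myMu M) :=
            eLpNorm_add_le (myContDiff1 P1 q1).aestronglyMeasurable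
              (myContDiff1 P2 q2).aestronglyMeasurable one_le_two
        _ < ε / 2 + ε / 2 := ENNReal.add_lt_add hq1 hq2
        _ = ε := ENNReal.add_halves ε
  | mul_X P n ih =>
      intro ε hε hεt
      fin_cases n
      · -- multiplication by X 0, i.e. by e^s
        show ∃ q : MvPolynomial (Fin 2) ℝ, eLpNorm (fun p : ℝ × ℝ =>
          Real.exp p.1 * MvPolynomial.eval ![Real.exp p.1, p.2] (P * MvPolynomial.X 0)
            - Real.exp p.1 * MvPolynomial.eval ![-p.1, p.2] q) 2 (myMu M) < ε
        have hε2 : (0:ℝ≥0∞) < ε / 2 := ENNReal.half_pos hε.ne'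
        have hε2t : ε / 2 ≠ ⊤ := (lt_of_le_of_lt (ENNReal.half_le_self) hεt.lt_top).ne
        obtain ⟨q1, hq1⟩ := ih (ε / 2) hε2 hε2t
        obtain ⟨N, hN⟩ := ((myTendstoB M q1).eventually_lt_const hε2).exists
        refine ⟨q1 * (1 - MvPolynomial.C ((N:ℝ)⁻¹) * MvPolynomial.X 0) ^ N, ?_⟩
        have h : (fun p : ℝ × ℝ => Real.exp p.1
              * MvPolynomial.eval ![Real.exp p.1, p.2] (P * MvPolynomial.X 0)
            - Real.exp p.1 * MvPolynomial.eval ![-p.1, p.2]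
              (q1 * (1 - MvPolynomial.C ((N:ℝ)⁻¹) * MvPolynomial.X 0) ^ N))
            = (fun p : ℝ × ℝ => Real.exp p.1
                * (Real.exp p.1 * MvPolynomial.eval ![Real.exp p.1, p.2] P
                  - Real.exp p.1 * MvPolynomial.eval ![-p.1, p.2] q1))
              + (fun p : ℝ × ℝ => Real.exp p.1 * (Real.exp p.1 - (1 + p.1 / (N:ℝ)) ^ N)
                  * MvPolynomial.eval ![-p.1, p.2] q1) := by
          funext p
          simp only [map_mul, map_pow, map_sub, map_one, MvPolynomial.eval_X,
            MvPolynomial.eval_C, Matrix.cons_val_zero, Pi.add_apply]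
          rw [show (1:ℝ) - (N:ℝ)⁻¹ * -p.1 = 1 + p.1 / (N:ℝ) by rw [div_eq_mul_inv]; ring]
          ring
        rw [h]
        calc eLpNorm _ 2 (myMu M)
            ≤ eLpNorm (fun p : ℝ × ℝ => Real.exp p.1
                * (Real.exp p.1 * MvPolynomial.eval ![Real.exp p.1, p.2] P
                  - Real.exp p.1 * MvPolynomial.eval ![-p.1, p.2] q1)) 2 (myMu M)
              + eLpNorm (fun p : ℝ × ℝ => Real.exp p.1 * (Real.exp p.1 - (1 + p.1 / (N:ℝ)) ^ N)
                  * MvPolynomial.eval ![-p.1, p.2] q1) 2 (myMu M) := by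
              apply eLpNorm_add_le _ _ one_le_two
              · exact ((Real.continuous_exp.comp continuous_fst).mul
                  (myContDiff1 P q1)).aestronglyMeasurable
              · exact (((Real.continuous_exp.comp continuous_fst).mul
                  ((Real.continuous_exp.comp continuous_fst).sub
                    ((continuous_const.add (continuous_fst.div_const _)).pow N))).mul
                  (myContEval q1 continuous_fst.neg continuous_snd)).aestronglyMeasurable
          _ < ε / 2 + ε / 2 := by
              apply ENNReal.add_lt_add _ hN
              apply lt_of_le_of_lt _ hq1
              apply eLpNorm_mono_ae
              rw [myMu]
              filter_upwards [ae_restrict_mem hSmeas] with p hp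
              have hp1 : p.1 ≤ 0 := hp.1
              rw [norm_mul]
              have h1 : ‖Real.exp p.1‖ ≤ 1 := by
                rw [Real.norm_eq_abs, abs_of_pos (Real.exp_pos _)]
                exact Real.exp_le_one_iff.2 hp1
              calc ‖Real.exp p.1‖ * ‖_‖ ≤ 1 * ‖_‖ :=
                    mul_le_mul_of_nonneg_right h1 (norm_nonneg _)
                _ = ‖_‖ := one_mul _
          _ = ε := ENNReal.add_halves ε
      · -- multiplication by X 1, i.e. by y
        show ∃ q : MvPolynomial (Fin 2) ℝ, eLpNorm (fun p : ℝ × ℝ =>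
          Real.exp p.1 * MvPolynomial.eval ![Real.exp p.1, p.2] (P * MvPolynomial.X 1)
            - Real.exp p.1 * MvPolynomial.eval ![-p.1, p.2] q) 2 (myMu M) < ε
        have hb0 : ENNReal.ofReal (M + 1) ≠ 0 := (ENNReal.ofReal_pos.2 (by linarith)).ne'
        have hbt : ENNReal.ofReal (M + 1) ≠ ⊤ := ENNReal.ofReal_ne_top
        have hε' : (0:ℝ≥0∞) < ε / ENNReal.ofReal (M + 1) := ENNReal.div_pos hε.ne' hbt
        have hε't : ε / ENNReal.ofReal (M + 1) ≠ ⊤ := (ENNReal.div_lt_top hεt hb0).ne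
        obtain ⟨q1, hq1⟩ := ih _ hε' hε't
        refine ⟨q1 * MvPolynomial.X 1, ?_⟩
        have h : (fun p : ℝ × ℝ => Real.exp p.1
              * MvPolynomial.eval ![Real.exp p.1, p.2] (P * MvPolynomial.X 1)
            - Real.exp p.1 * MvPolynomial.eval ![-p.1, p.2] (q1 * MvPolynomial.X 1))
            = fun p : ℝ × ℝ => p.2 * (Real.exp p.1 * MvPolynomial.eval ![Real.exp p.1, p.2] P
                - Real.exp p.1 * MvPolynomial.eval ![-p.1, p.2] q1) := by
          funext p
          simp only [map_mul, MvPolynomial.eval_X, Matrix.cons_val_one, Matrix.head_cons, Matrix.cons_val_zero]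
          ring
        rw [h]
        have hle : eLpNorm (fun p : ℝ × ℝ => p.2
              * (Real.exp p.1 * MvPolynomial.eval ![Real.exp p.1, p.2] P
                - Real.exp p.1 * MvPolynomial.eval ![-p.1, p.2] q1)) 2 (myMu M)
            ≤ eLpNorm ((M + 1) • fun p : ℝ × ℝ =>
                (Real.exp p.1 * MvPolynomial.eval ![Real.exp p.1, p.2] P
                - Real.exp p.1 * MvPolynomial.eval ![-p.1, p.2] q1)) 2 (myMu M) := by
          apply eLpNorm_mono_ae
          rw [myMu]
          filter_upwards [ae_restrict_mem hSmeas] with p hp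
          have hp2 : p.2 ∈ Set.Icc (0:ℝ) M := hp.2
          simp only [Pi.smul_apply, smul_eq_mul, norm_mul]
          apply mul_le_mul_of_nonneg_right _ (norm_nonneg _)
          rw [Real.norm_eq_abs, Real.norm_eq_abs, abs_of_nonneg hp2.1,
            abs_of_pos (by linarith : (0:ℝ) < M + 1)]
          linarith [hp2.2]
        rw [eLpNorm_const_smul] at hle
        apply lt_of_le_of_lt hle
        have hnn : ‖(M+1:ℝ)‖ₑ = ENNReal.ofReal (M + 1) :=
          Real.enorm_eq_ofReal (by linarith)
        rw [hnn] at hle ⊢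
        calc ENNReal.ofReal (M + 1) * eLpNorm _ 2 (myMu M)
            < ENNReal.ofReal (M + 1) * (ε / ENNReal.ofReal (M + 1)) :=
              ENNReal.mul_lt_mul_right hb0 hbt hq1
          _ = ε := ENNReal.mul_div_cancel hb0 hbt
lemma mySW (M : ℝ) (H : ℝ × ℝ → ℝ) (hH : Continuous H) (ε : ℝ) (hε : 0 < ε) :
    ∃ P : MvPolynomial (Fin 2) ℝ, ∀ w : ℝ × ℝ,
      w ∈ Set.Icc (0:ℝ) 1 ×ˢ Set.Icc (0:ℝ) M →
      |H w - MvPolynomial.eval ![w.1, w.2] P| < ε := by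
  set K : Set (ℝ × ℝ) := Set.Icc (0:ℝ) 1 ×ˢ Set.Icc (0:ℝ) M with hKdef
  have hK : IsCompact K := isCompact_Icc.prod isCompact_Icc
  haveI : CompactSpace K := isCompact_iff_compactSpace.mp hK
  set f : Fin 2 → C(K, ℝ) :=
    ![⟨fun k => (k : ℝ × ℝ).1, continuous_fst.comp continuous_subtype_val⟩,
      ⟨fun k => (k : ℝ × ℝ).2, continuous_snd.comp continuous_subtype_val⟩] with hfdef
  have hf0 : ∀ k : K, f 0 k = (k : ℝ × ℝ).1 := fun k => rfl
  have hf1 : ∀ k : K, f 1 k = (k : ℝ × ℝ).2 := fun k => rfl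
  set A : Subalgebra ℝ C(K, ℝ) := Algebra.adjoin ℝ (Set.range f) with hAdef
  have sep : A.SeparatesPoints := by
    intro x y hxy
    have hne : (x : ℝ × ℝ) ≠ (y : ℝ × ℝ) := Subtype.coe_injective.ne hxy
    by_cases h1 : (x : ℝ × ℝ).1 = (y : ℝ × ℝ).1
    · have h2 : (x : ℝ × ℝ).2 ≠ (y : ℝ × ℝ).2 := by
        intro h2; exact hne (Prod.ext h1 h2)
      exact ⟨f 1, ⟨f 1, Algebra.subset_adjoin (Set.mem_range_self 1), rfl⟩, h2⟩
    · exact ⟨f 0, ⟨f 0, Algebra.subset_adjoin (Set.mem_range_self 0), rfl⟩, h1⟩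
  have htop := ContinuousMap.subalgebra_topologicalClosure_eq_top_of_separatesPoints A sep
  set HK : C(K, ℝ) := ⟨fun k => H k, hH.comp continuous_subtype_val⟩ with hHKdef
  have hdense : HK ∈ closure (A : Set C(K, ℝ)) := by
    have : HK ∈ A.topologicalClosure := htop ▸ Algebra.mem_top
    exact this
  obtain ⟨b, hbA, hdist⟩ := Metric.mem_closure_iff.mp hdense ε hε
  have hbA' : b ∈ (MvPolynomial.aeval (R := ℝ) f).range := by
    have he : A = (MvPolynomial.aeval (R := ℝ) f).range := Algebra.adjoin_range_eq_range_aeval ℝ f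
    rw [hAdef] at hbA
    rw [← he]
    exact hbA
  obtain ⟨P, hP⟩ := hbA'
  have heval : ∀ (Q : MvPolynomial (Fin 2) ℝ) (k : K),
      (MvPolynomial.aeval (R := ℝ) f Q) k = MvPolynomial.eval ![(k : ℝ × ℝ).1, (k : ℝ × ℝ).2] Q := by
    intro Q k
    induction Q using MvPolynomial.induction_on with
    | C a => simp [MvPolynomial.aeval_C]
    | add p q hp hq => simp only [map_add, ContinuousMap.add_apply, hp, hq]
    | mul_X p n hp =>
        simp only [map_mul, ContinuousMap.mul_apply, hp, MvPolynomial.aeval_X,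
          MvPolynomial.eval_mul, MvPolynomial.eval_X]
        congr 1
        fin_cases n
        · simp [hf0 k]
        · simp [hf1 k]
  refine ⟨P, ?_⟩
  intro w hw
  have hk := (ContinuousMap.dist_lt_iff hε).mp hdist ⟨w, hw⟩
  rw [Real.dist_eq] at hk
  have hb : b ⟨w, hw⟩ = MvPolynomial.eval ![w.1, w.2] P := by
    rw [← hP]; exact heval P ⟨w, hw⟩
  have hH' : HK ⟨w, hw⟩ = H w := rfl
  rwa [hH', hb] at hk
lemma myExpMem (M : ℝ) : MemLp (fun p : ℝ × ℝ => Real.exp p.1) 2 (myMu M) := by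
  rw [memLp_two_iff_integrable_sq (Continuous.aestronglyMeasurable (by fun_prop))]
  apply (myIntA (M := M) two_pos 1).congr
  filter_upwards with p
  rw [map_one, mul_one, show (2:ℝ) * p.1 = p.1 + p.1 by ring, Real.exp_add, sq]

theorem stmt19 (M : ℝ) (hM : 0 < M) (g : ℝ × ℝ → ℝ)
    (hg : MemLp g 2 (volume.restrict (Set.Iic (0 : ℝ) ×ˢ Set.Icc (0 : ℝ) M)))
    (δ : ℝ) (hδ : 0 < δ) :
    ∃ q : MvPolynomial (Fin 2) ℝ,
      eLpNorm
        (fun p : ℝ × ℝ => g p - Real.exp p.1 * MvPolynomial.eval ![-p.1, p.2] q) 2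
        (volume.restrict (Set.Iic (0 : ℝ) ×ˢ Set.Icc (0 : ℝ) M))
        < ENNReal.ofReal δ := by
  classical
  show ∃ q : MvPolynomial (Fin 2) ℝ,
      eLpNorm (fun p : ℝ × ℝ => g p - Real.exp p.1 * MvPolynomial.eval ![-p.1, p.2] q) 2
        (myMu M) < ENNReal.ofReal δ
  have hg : MemLp g 2 (myMu M) := hg
  have hSmeas : MeasurableSet (Set.Iic (0:ℝ) ×ˢ Set.Icc (0:ℝ) M) :=
    measurableSet_Iic.prod measurableSet_Icc
  set E := eLpNorm (fun p : ℝ × ℝ => Real.exp p.1) 2 (myMu M) with hEdef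
  have hE : E ≠ ⊤ := (myExpMem M).eLpNorm_ne_top
  -- Step 1 : approximate by a compactly supported continuous function
  set g' : ℝ × ℝ → ℝ := (Set.Iic (0:ℝ) ×ˢ Set.Icc (0:ℝ) M).indicator g with hg'def
  have hg'mem : MemLp g' 2 volume := by
    constructor
    · exact (aestronglyMeasurable_indicator_iff hSmeas).2 hg.1
    · rw [eLpNorm_indicator_eq_eLpNorm_restrict hSmeas]
      exact hg.2
  obtain ⟨h, hsupp, hclose, hcont, _⟩ :=
    hg'mem.exists_hasCompactSupport_eLpNorm_sub_le (p := 2) ENNReal.ofNat_ne_top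
      (ε := ENNReal.ofReal (δ/4)) (ENNReal.ofReal_pos.2 (by linarith)).ne'
  have step1 : eLpNorm (fun p : ℝ × ℝ => g p - h p) 2 (myMu M) ≤ ENNReal.ofReal (δ/4) := by
    have e1 : eLpNorm (fun p : ℝ × ℝ => g p - h p) 2 (myMu M) = eLpNorm (g' - h) 2 (myMu M) := by
      apply eLpNorm_congr_ae
      rw [myMu]
      filter_upwards [ae_restrict_mem hSmeas] with p hp
      simp [hg'def, Set.indicator_of_mem hp]
    rw [e1]
    exact le_trans (eLpNorm_mono_measure _ Measure.restrict_le_self) hclose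
  -- support bound for h
  obtain ⟨r, hr⟩ := hsupp.isBounded.subset_closedBall 0
  set R : ℝ := max r 0 with hRdef
  have hR0 : 0 ≤ R := le_max_right r 0
  have hzero : ∀ p : ℝ × ℝ, p.1 < -R → h p = 0 := by
    intro p hp
    apply image_eq_zero_of_notMem_tsupport
    intro hmem
    have h1 := hr hmem
    rw [Metric.mem_closedBall, dist_zero_right] at h1
    have h2 : ‖p.1‖ ≤ ‖p‖ := norm_fst_le p
    rw [Real.norm_eq_abs] at h2
    have h3 : -p.1 ≤ |p.1| := neg_le_abs p.1
    have h4 : r ≤ R := le_max_left r 0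
    linarith
  -- the function H
  set c : ℝ := Real.exp (-(R+1)) with hcdef
  have hc : 0 < c := Real.exp_pos _
  set H : ℝ × ℝ → ℝ := fun w => h (Real.log (max w.1 c), w.2) / max w.1 c with hHdef
  have hmaxpos : ∀ w : ℝ × ℝ, 0 < max w.1 c := fun w => lt_of_lt_of_le hc (le_max_right _ _)
  have hHcont : Continuous H := by
    apply Continuous.div
    · exact hcont.comp
        (((continuous_fst.max continuous_const).log fun w => (hmaxpos w).ne').prodMk
          continuous_snd)
    · exact continuous_fst.max continuous_const
    · exact fun w => (hmaxpos w).ne'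
  have hHid : ∀ p : ℝ × ℝ, p.1 ≤ 0 → h p = Real.exp p.1 * H (Real.exp p.1, p.2) := by
    intro p hp1
    rcases le_or_gt c (Real.exp p.1) with hcase | hcase
    · rw [hHdef]
      simp only
      rw [max_eq_left hcase, Real.log_exp, Prod.mk.eta,
        mul_div_cancel₀ _ (Real.exp_pos p.1).ne']
    · have hp1' : p.1 < -(R+1) := by
        exact Real.exp_lt_exp.mp hcase
      have h0 : h p = 0 := hzero p (by linarith)
      rw [h0, hHdef]
      simp only
      rw [max_eq_right hcase.le, hcdef, Real.log_exp]
      rw [hzero (-(R+1), p.2) (by simp only; linarith)]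
      simp
  -- Step 2 : Stone-Weierstrass
  set ε₂ : ℝ := (δ/4) / (E.toReal + 1) with hε₂def
  have hEt : 0 ≤ E.toReal := ENNReal.toReal_nonneg
  have hε₂ : 0 < ε₂ := by
    apply div_pos (by linarith) (by linarith)
  obtain ⟨P, hP⟩ := mySW M H hHcont ε₂ hε₂
  have step2 : eLpNorm (fun p : ℝ × ℝ =>
      h p - Real.exp p.1 * MvPolynomial.eval ![Real.exp p.1, p.2] P) 2 (myMu M)
      ≤ ENNReal.ofReal (δ/4) := by
    have hmono : eLpNorm (fun p : ℝ × ℝ =>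
        h p - Real.exp p.1 * MvPolynomial.eval ![Real.exp p.1, p.2] P) 2 (myMu M)
        ≤ eLpNorm (fun p : ℝ × ℝ => ε₂ * Real.exp p.1) 2 (myMu M) := by
      apply eLpNorm_mono_ae
      rw [myMu]
      filter_upwards [ae_restrict_mem hSmeas] with p hp
      have hp1 : p.1 ≤ 0 := hp.1
      have hw : (Real.exp p.1, p.2) ∈ Set.Icc (0:ℝ) 1 ×ˢ Set.Icc (0:ℝ) M :=
        ⟨⟨(Real.exp_pos _).le, Real.exp_le_one_iff.2 hp1⟩, hp.2⟩
      have hPb := hP _ hw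
      rw [hHid p hp1]
      have he : Real.exp p.1 * H (Real.exp p.1, p.2)
          - Real.exp p.1 * MvPolynomial.eval ![Real.exp p.1, p.2] P
          = Real.exp p.1 * (H (Real.exp p.1, p.2)
            - MvPolynomial.eval ![Real.exp p.1, p.2] P) := by ring
      rw [he, Real.norm_eq_abs, Real.norm_eq_abs, abs_mul, abs_mul,
        abs_of_pos (Real.exp_pos _), abs_of_pos hε₂]
      rw [mul_comm ε₂ (Real.exp p.1)]
      exact mul_le_mul_of_nonneg_left (le_of_lt hPb) (Real.exp_pos _).le
    have hsmul : (fun p : ℝ × ℝ => ε₂ * Real.exp p.1)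
        = ε₂ • (fun p : ℝ × ℝ => Real.exp p.1) := rfl
    rw [hsmul, eLpNorm_const_smul, ← hEdef] at hmono
    apply le_trans hmono
    have h1 : ‖ε₂‖ₑ = ENNReal.ofReal ε₂ := Real.enorm_eq_ofReal hε₂.le
    rw [h1]
    calc ENNReal.ofReal ε₂ * E ≤ ENNReal.ofReal ε₂ * ENNReal.ofReal (E.toReal + 1) := by
          apply mul_le_mul_right
          conv_lhs => rw [← ENNReal.ofReal_toReal hE]
          exact ENNReal.ofReal_le_ofReal (by linarith)
      _ = ENNReal.ofReal (ε₂ * (E.toReal + 1)) := (ENNReal.ofReal_mul hε₂.le).symm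
      _ = ENNReal.ofReal (δ/4) := by
          rw [hε₂def, div_mul_cancel₀ _ (by linarith : E.toReal + 1 ≠ 0)]
  -- Step 3 : main approximation lemma
  obtain ⟨q, hq⟩ := myMain M hM P (ENNReal.ofReal (δ/4))
    (ENNReal.ofReal_pos.2 (by linarith)) ENNReal.ofReal_ne_top
  refine ⟨q, ?_⟩
  have hdecomp : (fun p : ℝ × ℝ => g p - Real.exp p.1 * MvPolynomial.eval ![-p.1, p.2] q)
      = (fun p : ℝ × ℝ => (g p - h p)
          + ((h p - Real.exp p.1 * MvPolynomial.eval ![Real.exp p.1, p.2] P)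
            + (Real.exp p.1 * MvPolynomial.eval ![Real.exp p.1, p.2] P
              - Real.exp p.1 * MvPolynomial.eval ![-p.1, p.2] q))) := by
    funext p; ring
  rw [hdecomp]
  have aesm1 : AEStronglyMeasurable (fun p : ℝ × ℝ => g p - h p) (myMu M) :=
    hg.1.sub hcont.aestronglyMeasurable
  have cont2 : Continuous (fun p : ℝ × ℝ =>
      h p - Real.exp p.1 * MvPolynomial.eval ![Real.exp p.1, p.2] P) :=
    hcont.sub ((Real.continuous_exp.comp continuous_fst).mul
      (myContEval P (Real.continuous_exp.comp continuous_fst) continuous_snd))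
  have cont3 := myContDiff1 P q
  calc eLpNorm _ 2 (myMu M)
      ≤ eLpNorm (fun p : ℝ × ℝ => g p - h p) 2 (myMu M)
        + eLpNorm (fun p : ℝ × ℝ =>
            (h p - Real.exp p.1 * MvPolynomial.eval ![Real.exp p.1, p.2] P)
            + (Real.exp p.1 * MvPolynomial.eval ![Real.exp p.1, p.2] P
              - Real.exp p.1 * MvPolynomial.eval ![-p.1, p.2] q)) 2 (myMu M) :=
        eLpNorm_add_le aesm1 (cont2.add cont3).aestronglyMeasurable one_le_two
    _ ≤ eLpNorm (fun p : ℝ × ℝ => g p - h p) 2 (myMu M)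
        + (eLpNorm (fun p : ℝ × ℝ =>
            h p - Real.exp p.1 * MvPolynomial.eval ![Real.exp p.1, p.2] P) 2 (myMu M)
          + eLpNorm (fun p : ℝ × ℝ =>
            Real.exp p.1 * MvPolynomial.eval ![Real.exp p.1, p.2] P
              - Real.exp p.1 * MvPolynomial.eval ![-p.1, p.2] q) 2 (myMu M)) := by
        apply add_le_add_right
        exact eLpNorm_add_le cont2.aestronglyMeasurable cont3.aestronglyMeasurable one_le_two
    _ ≤ ENNReal.ofReal (δ/4) + (ENNReal.ofReal (δ/4) + ENNReal.ofReal (δ/4)) := by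
        apply add_le_add step1
        exact add_le_add step2 hq.le
    _ = ENNReal.ofReal (δ/4 + (δ/4 + δ/4)) := by
        rw [← ENNReal.ofReal_add (by linarith) (by linarith),
          ← ENNReal.ofReal_add (by linarith) (by linarith)]
    _ < ENNReal.ofReal δ := by
        rw [ENNReal.ofReal_lt_ofReal_iff hδ]
        linarith
end
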